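/- arXiv:1611.02020 — 3 statements merged into one kernel-verified Lean document; each statement's English description precedes it below -/
import Mathlib

section
/- Let P(s) = a₃s³ + a₂s² + a₁s + a₀ be a real cubic polynomial. If all coefficients a₀, a₁, a₂, a₃ are strictly negative and a₂·a₁ > a₃·a₀, then every complex root of P has strictly negative real part. -/
/-!
Write a root as `s = x + iy` and suppose first `y ≠ 0`. Dividing the imaginary part of the
equation by `y` and using it to eliminate `y²` from the real part leaves
`2x((2a₃x + a₂)² + a₃a₁) = a₃a₀ - a₂a₁`; the bracket is positive because `a₃a₁ > 0`, and the
right-hand side is negative by the Hurwitz condition, so `x < 0`. A real root `x ≥ 0` is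
impossible because every term of `a₃x³ + a₂x² + a₁x + a₀` is then nonpositive and `a₀ < 0`.
-/

open Complex

section
variable {a0 a1 a2 a3 x y : ℝ}

lemma cubic_neg_of_nonneg (h0 : a0 < 0) (h1 : a1 ≤ 0) (h2 : a2 ≤ 0) (h3 : a3 ≤ 0)
    (hx : 0 ≤ x) : a3 * x ^ 3 + a2 * x ^ 2 + a1 * x + a0 < 0 := by
  have t3 := mul_nonpos_of_nonpos_of_nonneg h3 (pow_nonneg hx 3)
  have t2 := mul_nonpos_of_nonpos_of_nonneg h2 (pow_nonneg hx 2)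
  have t1 := mul_nonpos_of_nonpos_of_nonneg h1 hx
  linarith

lemma cubic_root_re_im_eq_zero {s : ℂ}
    (hroot : (a3 : ℂ) * s ^ 3 + (a2 : ℂ) * s ^ 2 + (a1 : ℂ) * s + (a0 : ℂ) = 0) :
    a3 * (s.re ^ 3 - 3 * s.re * s.im ^ 2) + a2 * (s.re ^ 2 - s.im ^ 2) + a1 * s.re + a0 = 0 ∧
      s.im * (a3 * (3 * s.re ^ 2 - s.im ^ 2) + 2 * a2 * s.re + a1) = 0 := by
  have hre := congrArg re hroot
  have him := congrArg im hroot
  simp only [pow_succ, pow_zero, one_mul, add_re, add_im, mul_re, mul_im, ofReal_re,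
    ofReal_im, zero_re, zero_im] at hre him
  exact ⟨by linear_combination hre, by linear_combination him⟩

lemma two_mul_mul_eq_of_cubic_re_im
    (hre : a3 * (x ^ 3 - 3 * x * y ^ 2) + a2 * (x ^ 2 - y ^ 2) + a1 * x + a0 = 0)
    (him : a3 * (3 * x ^ 2 - y ^ 2) + 2 * a2 * x + a1 = 0) :
    2 * x * ((2 * a3 * x + a2) ^ 2 + a3 * a1) = a3 * a0 - a2 * a1 := by
  linear_combination (-a3) * hre + (3 * a3 * x + a2) * him

end

/-- Routh–Hurwitz criterion for cubics (negative-coefficient convention):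
if `a₀, a₁, a₂, a₃ < 0` and `a₂·a₁ > a₃·a₀`, every complex root of
`a₃ s³ + a₂ s² + a₁ s + a₀` has strictly negative real part. -/
theorem routh_hurwitz_cubic (a0 a1 a2 a3 : ℝ)
    (h0 : a0 < 0) (h1 : a1 < 0) (h2 : a2 < 0) (h3 : a3 < 0)
    (h : a2 * a1 > a3 * a0) (s : ℂ)
    (hroot : (a3 : ℂ) * s ^ 3 + (a2 : ℂ) * s ^ 2 + (a1 : ℂ) * s + (a0 : ℂ) = 0) :
    s.re < 0 := by
  obtain ⟨hre, him⟩ := cubic_root_re_im_eq_zero hroot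
  rcases eq_or_ne s.im 0 with hy | hy
  · by_contra! hx
    have hreal : a3 * s.re ^ 3 + a2 * s.re ^ 2 + a1 * s.re + a0 = 0 := by
      rw [hy] at hre
      linear_combination hre
    exact (cubic_neg_of_nonneg h0 h1.le h2.le h3.le hx).ne hreal
  · have key := two_mul_mul_eq_of_cubic_re_im hre ((mul_eq_zero.mp him).resolve_left hy)
    have hpos : 0 < (2 * a3 * s.re + a2) ^ 2 + a3 * a1 := by
      have := mul_pos_of_neg_of_neg h3 h1
      positivity
    have hneg : 2 * s.re * ((2 * a3 * s.re + a2) ^ 2 + a3 * a1) < 0 := by linarith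
    linarith [neg_of_mul_neg_left hneg hpos.le]
end

section
/- Consider an ODE system ż = F(z, h(t)) on ℝ⁵ (with coordinates z = (x, y, θ, α₂, α₃) and control h : ℝ → ℝ²), and suppose F satisfies the symmetry F(σ(z), h) = Dσ · F(z, h) for all z and h, where σ(x, y, θ, α₂, α₃) = (−x, −y, θ, α₃, α₂) is a linear involution. Assume F is locally Lipschitz in z so solutions are unique. If z is a solution with initial condition fixed by σ (i.e., x(0) = y(0) = 0 and α₂(0) = α₃(0)), then z(t) is fixed by σ for all t: x(t) = y(t) = 0 and α₂(t) = α₃(t) for all t in the interval of existence. -/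
open Metric Set Filter Topology

/-- Symmetry of the magneto-elastic swimmer (Proposition 1): if the dynamics
`ż = F(z, h(t))` on `ℝ⁵` (coordinates `(x, y, θ, α₂, α₃)`) is equivariant under the
linear involution `σ(x, y, θ, α₂, α₃) = (−x, −y, θ, α₃, α₂)`, `F` is locally Lipschitz
and the control `h` is continuous, then any solution starting at a `σ`-fixed initial
condition (`x(0) = y(0) = 0`, `α₂(0) = α₃(0)`) stays `σ`-fixed:
`x(t) = y(t) = 0` and `α₂(t) = α₃(t)` for all `t`. -/
theorem symmetric_swimmer_stays_symmetric
    (F : (Fin 5 → ℝ) → (Fin 2 → ℝ) → (Fin 5 → ℝ))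
    (h : ℝ → Fin 2 → ℝ) (hcont : Continuous h)
    (hLip : LocallyLipschitz (fun p : (Fin 5 → ℝ) × (Fin 2 → ℝ) => F p.1 p.2))
    (hEquiv : ∀ (z : Fin 5 → ℝ) (u : Fin 2 → ℝ),
      F (![-z 0, -z 1, z 2, z 4, z 3]) u
        = (fun w : Fin 5 → ℝ => ![-w 0, -w 1, w 2, w 4, w 3]) (F z u))
    (z : ℝ → Fin 5 → ℝ)
    (hsol : ∀ t : ℝ, HasDerivAt z (F (z t) (h t)) t)
    (hinit : z 0 0 = 0 ∧ z 0 1 = 0 ∧ z 0 3 = z 0 4) :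
    ∀ t : ℝ, z t 0 = 0 ∧ z t 1 = 0 ∧ z t 3 = z t 4 := by
  classical
  set σ : (Fin 5 → ℝ) → (Fin 5 → ℝ) := fun w => ![-w 0, -w 1, w 2, w 4, w 3] with hσdef
  have hσ0 : ∀ w, σ w 0 = -w 0 := fun w => rfl
  have hσ1 : ∀ w, σ w 1 = -w 1 := fun w => rfl
  have hσ2 : ∀ w, σ w 2 = w 2 := fun w => rfl
  have hσ3 : ∀ w, σ w 3 = w 4 := fun w => rfl
  have hσ4 : ∀ w, σ w 4 = w 3 := fun w => rfl
  have hσcont : Continuous σ := by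
    apply continuous_pi
    intro i
    fin_cases i
    · exact (continuous_apply (0 : Fin 5)).neg
    · exact (continuous_apply (1 : Fin 5)).neg
    · exact continuous_apply (2 : Fin 5)
    · exact continuous_apply (4 : Fin 5)
    · exact continuous_apply (3 : Fin 5)
  have hzc : Continuous z := by
    rw [continuous_iff_continuousAt]
    exact fun t => (hsol t).continuousAt
  set g : ℝ → Fin 5 → ℝ := fun t => σ (z t) with hgdef
  have hgc : Continuous g := hσcont.comp hzc
  -- g is also a solution
  have hg' : ∀ t : ℝ, HasDerivAt g (F (g t) (h t)) t := by
    intro t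
    have heq : F (g t) (h t) = σ (F (z t) (h t)) := hEquiv (z t) (h t)
    rw [heq]
    rw [hasDerivAt_pi]
    intro i
    have hz := hasDerivAt_pi.mp (hsol t)
    fin_cases i
    · exact (hz 0).neg
    · exact (hz 1).neg
    · exact hz 2
    · exact hz 4
    · exact hz 3
  -- same initial condition
  have hg0 : g 0 = z 0 := by
    funext i
    fin_cases i
    · simp [hgdef, hσ0, hinit.1]
    · simp [hgdef, hσ1, hinit.2.1]
    · rfl
    · simp [hgdef, hσ3, hinit.2.2]
    · simp [hgdef, hσ4, hinit.2.2]
  -- the agreement set is clopen and nonempty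
  set S : Set ℝ := {t | g t = z t} with hSdef
  have hSclosed : IsClosed S := isClosed_eq hgc hzc
  have hSopen : IsOpen S := by
    rw [isOpen_iff_mem_nhds]
    intro t₀ ht₀
    obtain ⟨K, U, hU, hLipU⟩ := hLip (z t₀, h t₀)
    obtain ⟨r, hr, hball⟩ := Metric.mem_nhds_iff.mp hU
    set s : ℝ → Set (Fin 5 → ℝ) := fun t =>
      {x | x ∈ ball (z t₀) r ∧ h t ∈ ball (h t₀) r} with hsdef
    have hv : ∀ t : ℝ, LipschitzOnWith K (fun x => F x (h t)) (s t) := by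
      intro t x hx y hy
      have hxU : (x, h t) ∈ U := hball (by
        rw [Metric.mem_ball, Prod.dist_eq]
        exact max_lt hx.1 hx.2)
      have hyU : (y, h t) ∈ U := hball (by
        rw [Metric.mem_ball, Prod.dist_eq]
        exact max_lt hy.1 hy.2)
      have := hLipU hxU hyU
      simpa [Prod.edist_eq] using this
    have hmem : ∀ᶠ t in 𝓝 t₀,
        (HasDerivAt g (F (g t) (h t)) t ∧ g t ∈ s t) ∧
        (HasDerivAt z (F (z t) (h t)) t ∧ z t ∈ s t) := by
      have h1 : ∀ᶠ t in 𝓝 t₀, g t ∈ ball (z t₀) r := by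
        have : g t₀ ∈ ball (z t₀) r := by rw [ht₀]; exact mem_ball_self hr
        exact hgc.continuousAt.eventually_mem (Metric.isOpen_ball.mem_nhds this)
      have h2 : ∀ᶠ t in 𝓝 t₀, z t ∈ ball (z t₀) r := by
        exact hzc.continuousAt.eventually_mem (Metric.isOpen_ball.mem_nhds (mem_ball_self hr))
      have h3 : ∀ᶠ t in 𝓝 t₀, h t ∈ ball (h t₀) r := by
        exact hcont.continuousAt.eventually_mem (Metric.isOpen_ball.mem_nhds (mem_ball_self hr))
      filter_upwards [h1, h2, h3] with t ht1 ht2 ht3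
      exact ⟨⟨hg' t, ht1, ht3⟩, ⟨hsol t, ht2, ht3⟩⟩
    have := ODE_solution_unique_of_eventually (Filter.Eventually.of_forall hv)
      (hmem.mono fun t ht => ht.1) (hmem.mono fun t ht => ht.2) ht₀
    exact this
  have hS : S = univ := by
    have hne : S.Nonempty := ⟨0, hg0⟩
    exact IsClopen.eq_univ ⟨hSclosed, hSopen⟩ hne
  intro t
  have ht : g t = z t := by
    have : t ∈ S := hS ▸ mem_univ t
    exact this
  have e0 : -(z t 0) = z t 0 := congrFun ht 0
  have e1 : -(z t 1) = z t 1 := congrFun ht 1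
  have e3 : z t 4 = z t 3 := congrFun ht 3
  refine ⟨by linarith, by linarith, e3.symm⟩
end

section
/- Let f₀ be a C¹ vector field on ℝⁿ with f₀(X_e) = 0, and let g be a C¹ vector field. Then for all k ≥ 1, ad^k_{f₀}(g)(X_e) = (−Df₀(X_e))^k · g(X_e), where Df₀(X_e) is the Jacobian of f₀ at X_e. -/
/-- The Lie bracket of two vector fields on `ℝⁿ`: `[f, g](x) = Dg(x)·f(x) − Df(x)·g(x)`. -/
noncomputable def vfLieBracket {n : ℕ} (f g : (Fin n → ℝ) → (Fin n → ℝ)) :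
    (Fin n → ℝ) → (Fin n → ℝ) :=
  fun x => fderiv ℝ g x (f x) - fderiv ℝ f x (g x)

/-- If `f₀(X_e) = 0`, then for all `k ≥ 1`,
`ad^k_{f₀}(g)(X_e) = (−Df₀(X_e))^k · g(X_e)`. -/
theorem iterated_bracket_eq_jacobian_power {n : ℕ}
    (f₀ g : (Fin n → ℝ) → (Fin n → ℝ)) (Xe : Fin n → ℝ)
    (hf₀ : ContDiff ℝ (⊤ : ℕ∞) f₀) (hg : ContDiff ℝ (⊤ : ℕ∞) g) (h0 : f₀ Xe = 0) :
    ∀ k : ℕ, 1 ≤ k →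
      ((vfLieBracket f₀)^[k] g) Xe = ((-(fderiv ℝ f₀ Xe)) ^ k) (g Xe) := by
  have key : ∀ h : (Fin n → ℝ) → (Fin n → ℝ),
      vfLieBracket f₀ h Xe = (-(fderiv ℝ f₀ Xe)) (h Xe) := by
    intro h
    simp [vfLieBracket, h0]
  have main : ∀ k : ℕ,
      ((vfLieBracket f₀)^[k] g) Xe = ((-(fderiv ℝ f₀ Xe)) ^ k) (g Xe) := by
    intro k
    induction k with
    | zero => simp
    | succ k ih =>
      rw [Function.iterate_succ_apply', key, ih, pow_succ']
      rfl
  exact fun k _ => main k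
end
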